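/- Let X be a complex Banach space and L(X) the Banach algebra of bounded linear operators on X. Let M = [[A, B], [C, D]] ∈ M₂(L(X)) and suppose A and D have strongly Drazin inverses. If BD = 0 and D^π C = 0, where D^π = I − D·D^D and D^D is the Drazin inverse of D, then M has a Hirano inverse in M₂(L(X)). -/

import Mathlib

/-- `a` has a Hirano inverse: there exists `z` with `az = za`, `z = zaz`,
and `a^2 - az` nilpotent. -/
def HasHiranoInverse {R : Type*} [Ring R] (a : R) : Prop :=
  ∃ z : R, a * z = z * a ∧ z = z * a * z ∧ IsNilpotent (a ^ 2 - a * z)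

/-- `a` has a strongly Drazin inverse: there exists `z` with `az = za`, `z = zaz`,
and `a - az` nilpotent. -/
def HasStronglyDrazinInverse {R : Type*} [Ring R] (a : R) : Prop :=
  ∃ z : R, a * z = z * a ∧ z = z * a * z ∧ IsNilpotent (a - a * z)

variable {X : Type*} [NormedAddCommGroup X] [NormedSpace ℂ X] [CompleteSpace X]

/-! A ring element `a` has a Hirano inverse as soon as `a - a³` is nilpotent: then `a² - a⁴` is
nilpotent, so Newton's method in the commutative algebra `ℤ[a]` lifts `a²` to an idempotent `e`
with `a² - e` nilpotent, and `a e (1 + a² - e)⁻¹` is a Hirano inverse of `a`. Strongly Drazin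
invertible elements have `a - a²`, hence `a - a³`, nilpotent.

For the block matrix write `M = L + N` with `L = [[A, 0], [C, D]]` and `N = [[0, B], [0, 0]]`.
Since `C = D D^D C`, the hypothesis `BD = 0` gives `BC = 0`, so `N L = 0 = N²`. Then
`M - M³ = (L - L³) + (1 - L²) N`, where the second summand kills the whole sum from the left,
and `L - L³` is lower triangular with the nilpotent diagonal `A - A³`, `D - D³`. -/

open Polynomial

theorem exists_isIdempotentElem_isNilpotent_sub_of_isNilpotent_sub_sq {S : Type*} [CommRing S]
    {b : S} (h : IsNilpotent (b - b ^ 2)) :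
    ∃ e : S, IsIdempotentElem e ∧ IsNilpotent (b - e) := by
  have hP : IsNilpotent (aeval b (X - X ^ 2 : ℤ[X])) := by simpa using h
  have hP' : IsUnit (aeval b (derivative (X - X ^ 2 : ℤ[X]))) := by
    have hsq : aeval b (derivative (X - X ^ 2 : ℤ[X])) ^ 2
        = 1 - 4 * aeval b (X - X ^ 2 : ℤ[X]) := by
      simp only [derivative_sub, derivative_X, derivative_X_pow_succ, Nat.cast_one,
        Int.reduceAdd, map_ofNat, pow_one, aeval_sub, map_one, map_mul, aeval_X, map_pow]
      ring
    rw [← isUnit_pow_iff two_ne_zero, hsq]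
    exact (Commute.all _ _ |>.isNilpotent_mul_left hP).isUnit_one_sub
  obtain ⟨e, ⟨hbe, he⟩, -⟩ := existsUnique_nilpotent_sub_and_aeval_eq_zero hP hP'
  refine ⟨e, ?_, hbe⟩
  simp only [map_sub, aeval_X, map_pow] at he
  rw [IsIdempotentElem, ← sq]
  exact (sub_eq_zero.1 he).symm

theorem hasHiranoInverse_of_isNilpotent_sub_pow_three_of_comm {S : Type*} [CommRing S] {a : S}
    (h : IsNilpotent (a - a ^ 3)) : HasHiranoInverse a := by
  have hsq : IsNilpotent (a ^ 2 - (a ^ 2) ^ 2) := by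
    convert (Commute.all (a - a ^ 3) a).isNilpotent_mul_right h using 1; ring
  obtain ⟨e, he, hn⟩ := exists_isIdempotentElem_isNilpotent_sub_of_isNilpotent_sub_sq hsq
  obtain ⟨u, hu⟩ := hn.isUnit_one_add
  have hu' : (1 + (a ^ 2 - e)) * ↑u⁻¹ = 1 := by rw [← hu, Units.mul_inv]
  have he' : e * e = e := he
  have hae : a * (a * e * ↑u⁻¹) = e := by linear_combination e * hu' + ↑u⁻¹ * he'
  refine ⟨a * e * ↑u⁻¹, by ring, ?_, by rwa [hae]⟩
  linear_combination (-(a * e * ↑u⁻¹)) * hae - (a * ↑u⁻¹) * he'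

theorem HasHiranoInverse.map {R S F : Type*} [Ring R] [Ring S] [FunLike F R S]
    [RingHomClass F R S] (f : F) {a : R} (h : HasHiranoInverse a) : HasHiranoInverse (f a) := by
  obtain ⟨z, hc, hz, hn⟩ := h
  refine ⟨f z, ?_, ?_, ?_⟩
  · rw [← map_mul, hc, map_mul]
  · rw [← map_mul, ← map_mul, ← hz]
  · simpa using hn.map f

section Ring

variable {R : Type*} [Ring R]

open scoped IsMulCommutative in
theorem hasHiranoInverse_of_isNilpotent_sub_pow_three {a : R} (h : IsNilpotent (a - a ^ 3)) :
    HasHiranoInverse a := by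
  set S := Algebra.adjoin ℤ ({a} : Set R)
  have hS : HasHiranoInverse (⟨a, Algebra.self_mem_adjoin_singleton ℤ a⟩ : S) := by
    refine hasHiranoInverse_of_isNilpotent_sub_pow_three_of_comm ?_
    rw [← IsNilpotent.map_iff (f := S.val) Subtype.val_injective]
    simpa using h
  simpa using hS.map S.val

theorem HasStronglyDrazinInverse.isNilpotent_sub_sq {a : R} (h : HasStronglyDrazinInverse a) :
    IsNilpotent (a - a ^ 2) := by
  obtain ⟨z, hc, hz, hn⟩ := h
  set e := a * z with he
  have hae : Commute a e := (Commute.refl a).mul_right hc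
  have hee : e * e = e := by rw [he, mul_assoc, ← mul_assoc z a z, ← hz]
  have hfactor : a - a ^ 2 = (a - e) * (1 - e - a) := by
    have hexpand : (a - e) * (1 - e - a) = a - a ^ 2 + (e * e - e) + (e * a - a * e) := by
      noncomm_ring
    rw [hexpand, hee, hae.eq]; abel
  rw [hfactor]
  exact (((Commute.one_right _).sub_right (hae.sub_left (Commute.refl e))).sub_right
    ((Commute.refl a).sub_left hae.symm)).isNilpotent_mul_right hn

theorem isNilpotent_sub_pow_three_of_isNilpotent_sub_sq {a : R} (h : IsNilpotent (a - a ^ 2)) :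
    IsNilpotent (a - a ^ 3) := by
  have hfactor : a - a ^ 3 = (a - a ^ 2) * (1 + a) := by noncomm_ring
  rw [hfactor]
  exact ((Commute.one_right _).add_right
    ((Commute.refl a).sub_left ((Commute.refl a).pow_left 2))).isNilpotent_mul_right h

theorem isNilpotent_add_of_mul_add_eq_zero {u v : R} (hu : IsNilpotent u) (h : v * (u + v) = 0) :
    IsNilpotent (u + v) := by
  have hpow : ∀ k : ℕ, (u + v) ^ (k + 1) = u ^ k * (u + v) := by
    intro k
    induction k with
    | zero => simp
    | succ k ih => rw [pow_succ, ih, mul_assoc, add_mul, h, add_zero, ← mul_assoc, ← pow_succ]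
  obtain ⟨n, hn⟩ := hu
  exact ⟨n + 1, by rw [hpow, hn, zero_mul]⟩

theorem isNilpotent_add_sub_pow_three_of_mul_eq_zero {l n : R} (hnl : n * l = 0)
    (hnn : n * n = 0) (hl : IsNilpotent (l - l ^ 3)) : IsNilpotent ((l + n) - (l + n) ^ 3) := by
  have hsplit : (l + n) - (l + n) ^ 3 = (l - l ^ 3) + (1 - l ^ 2) * n := by
    have hexpand : (l + n) - (l + n) ^ 3 = (l - l ^ 3) + (1 - l ^ 2) * n
        - (l * (n * l) + l * (n * n) + n * l * l + n * l * n + n * n * l + n * n * n) := by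
      noncomm_ring
    rw [hexpand, hnl, hnn]; simp
  rw [hsplit]
  refine isNilpotent_add_of_mul_add_eq_zero hl ?_
  have hexpand : (1 - l ^ 2) * n * ((l - l ^ 3) + (1 - l ^ 2) * n)
      = (1 - l ^ 2) * ((n * l) * (1 - l ^ 2) + n * n - (n * l) * (l * n)) := by noncomm_ring
  rw [hexpand, hnl, hnn]; simp

theorem Matrix.exists_fin_two_lower_pow_eq (x y c : R) (k : ℕ) :
    ∃ c' : R, (!![x, 0; c, y] : Matrix (Fin 2) (Fin 2) R) ^ k = !![x ^ k, 0; c', y ^ k] := by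
  induction k with
  | zero => exact ⟨0, by simp [Matrix.one_fin_two]⟩
  | succ k ih =>
    obtain ⟨c', hc'⟩ := ih
    exact ⟨c' * x + y ^ k * c, by simp [pow_succ, hc']⟩

theorem Matrix.isNilpotent_fin_two_lower {x y : R} (c : R) (hx : IsNilpotent x)
    (hy : IsNilpotent y) : IsNilpotent (!![x, 0; c, y] : Matrix (Fin 2) (Fin 2) R) := by
  obtain ⟨m, hm⟩ := hx
  obtain ⟨n, hn⟩ := hy
  obtain ⟨c₁, hc₁⟩ := Matrix.exists_fin_two_lower_pow_eq x y c n
  obtain ⟨c₂, hc₂⟩ := Matrix.exists_fin_two_lower_pow_eq x y c m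
  refine ⟨n + m, ?_⟩
  rw [Matrix.eta_fin_two (0 : Matrix (Fin 2) (Fin 2) R)]
  simp [pow_add, hc₁, hc₂, hm, hn]

theorem Matrix.isNilpotent_fin_two_lower_sub_pow_three {x y : R} (c : R)
    (hx : IsNilpotent (x - x ^ 3)) (hy : IsNilpotent (y - y ^ 3)) :
    IsNilpotent ((!![x, 0; c, y] : Matrix (Fin 2) (Fin 2) R) - !![x, 0; c, y] ^ 3) := by
  obtain ⟨c', hc'⟩ := Matrix.exists_fin_two_lower_pow_eq x y c 3
  rw [hc']
  simp only [Matrix.of_sub_of, Matrix.cons_sub_cons, Matrix.empty_sub_empty, sub_zero]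
  exact Matrix.isNilpotent_fin_two_lower (c - c') hx hy

end Ring

theorem hirano_perturb_cor28 (A B C D DD : X →L[ℂ] X)
    (hA : HasStronglyDrazinInverse A)
    (hDD : D * DD = DD * D ∧ DD = DD * D * DD ∧ IsNilpotent (D - D * DD))
    (h1 : B * D = 0)
    (h2 : (1 - D * DD) * C = 0) :
    HasHiranoInverse (!![A, B; C, D] : Matrix (Fin 2) (Fin 2) (X →L[ℂ] X)) := by
  have hBC : B * C = 0 := by
    rw [sub_mul, one_mul, sub_eq_zero] at h2
    rw [h2, ← mul_assoc, ← mul_assoc, h1, zero_mul, zero_mul]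
  have hNL : !![0, B; 0, 0] * !![A, 0; C, D] = 0 := by
    ext i j; fin_cases i <;> fin_cases j <;> simp [hBC, h1]
  have hNN : !![0, B; 0, 0] * !![0, B; 0, 0] = 0 := by
    ext i j; fin_cases i <;> fin_cases j <;> simp
  have hL := Matrix.isNilpotent_fin_two_lower_sub_pow_three C
    (isNilpotent_sub_pow_three_of_isNilpotent_sub_sq hA.isNilpotent_sub_sq)
    (isNilpotent_sub_pow_three_of_isNilpotent_sub_sq
      (show HasStronglyDrazinInverse D from ⟨DD, hDD⟩).isNilpotent_sub_sq)
  rw [show !![A, B; C, D] = !![A, 0; C, D] + !![0, B; 0, 0] by simp]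
  exact hasHiranoInverse_of_isNilpotent_sub_pow_three
    (isNilpotent_add_sub_pow_three_of_mul_eq_zero hNL hNN hL)
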